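/- If a pair (s, J) of a string and a plaquette count is not balanced, then ∫ dU W_s(U) ∏_{p} Tr(U_p)^{J(p)} = 0, where the integral is over independent Haar-distributed unitary matrices on the positively oriented edges of the lattice. -/

import Mathlib

open MeasureTheory Finset

/-- Borel product measurable structure on matrices. -/
noncomputable instance matrixMeasurableSpace (N : ℕ) : MeasurableSpace (Matrix (Fin N) (Fin N) ℂ) :=
  show MeasurableSpace (Fin N → Fin N → ℂ) from inferInstance

/-- The group element traversed by a loop: oriented edges are pairs (e, b) of
a positive lattice edge e and an orientation b, with U_{(e,true)} = U_e and
U_{(e,false)} = U_e⁻¹; the loop variable is the ordered product. -/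
noncomputable def loopVar {N : ℕ} {Epos : Type*}
    (U : Epos → Matrix.unitaryGroup (Fin N) ℂ) (ℓ : List (Epos × Bool)) :
    Matrix.unitaryGroup (Fin N) ℂ :=
  (ℓ.map (fun eb => if eb.2 then U eb.1 else (U eb.1)⁻¹)).prod

/-- Wilson loop observable W_ℓ(U) = (1/N) Tr(U_ℓ). -/
noncomputable def Wloop {N : ℕ} {Epos : Type*}
    (U : Epos → Matrix.unitaryGroup (Fin N) ℂ) (ℓ : List (Epos × Bool)) : ℂ :=
  Matrix.trace ((loopVar U ℓ : Matrix.unitaryGroup (Fin N) ℂ) :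
    Matrix (Fin N) (Fin N) ℂ) / (N : ℂ)

/-- Wilson string observable: the product of the Wilson loop observables over
the loops of the string. -/
noncomputable def Wstring {N : ℕ} {Epos : Type*}
    (U : Epos → Matrix.unitaryGroup (Fin N) ℂ) (s : List (List (Epos × Bool))) : ℂ :=
  (s.map (Wloop U)).prod

/-- Occurrences of the oriented edge eb among the loops of s. -/
def occCount {Epos : Type*} [DecidableEq Epos] (s : List (List (Epos × Bool)))
    (eb : Epos × Bool) : ℕ :=
  (s.map (fun ℓ => ℓ.count eb)).sum

/-- (s, J) is balanced: every oriented edge occurs (in s together with J(p)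
copies of each plaquette boundary) as often as its reversal. -/
def BalancedPair {Epos Pl : Type*} [DecidableEq Epos] [Fintype Pl]
    (bd : Pl → List (Epos × Bool)) (s : List (List (Epos × Bool)))
    (J : Pl → ℕ) : Prop :=
  ∀ eb : Epos × Bool,
    occCount s eb + ∑ p, J p * (bd p).count eb
      = occCount s (eb.1, !eb.2) + ∑ p, J p * (bd p).count (eb.1, !eb.2)

/-!
Multiplying the link variable of a single edge `e₀` by a scalar phase `ζ` preserves Haar
measure, and it multiplies `Tr U_ℓ` by `ζ` raised to the number of times `ℓ` traverses `e₀`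
forwards minus backwards. The integrand therefore picks up the factor `ζ ^ k`, where `k` is the
imbalance of `(s, J)` at `e₀`; choosing `ζ` with `ζ ^ k ≠ 1` forces the integral to vanish.
-/

-- makes the unitary group a measurable group
noncomputable instance matrixBorelSpace (N : ℕ) : BorelSpace (Matrix (Fin N) (Fin N) ℂ) :=
  show BorelSpace (Fin N → Fin N → ℂ) from inferInstance

theorem integral_eq_zero_of_mul_left_eq_const_mul {G 𝕜 : Type*} [Group G] [MeasurableSpace G]
    [MeasurableMul G] [RCLike 𝕜] (μ : Measure G) [μ.IsMulLeftInvariant] {F : G → 𝕜} {g : G}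
    {c : 𝕜} (hc : c ≠ 1) (hF : ∀ x, F (g * x) = c * F x) : ∫ x, F x ∂μ = 0 := by
  have h := integral_mul_left_eq_self F g (μ := μ)
  simp only [hF, integral_const_mul] at h
  by_contra h0
  exact hc ((mul_eq_right₀ h0).1 h)

theorem Circle.exists_coe_zpow_ne_one {k : ℤ} (hk : k ≠ 0) : ∃ ζ : Circle, (ζ : ℂ) ^ k ≠ 1 := by
  refine ⟨Circle.exp (Real.pi / k), ?_⟩
  rw [← Circle.coe_zpow, ← Circle.exp_intCast_mul, mul_div_cancel₀ _ (Int.cast_ne_zero.2 hk),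
    Ne, Circle.coe_eq_one]
  exact Circle.exp_pi_ne_one

noncomputable def scalarUnitary (N : ℕ) : Circle →* Matrix.unitaryGroup (Fin N) ℂ where
  toFun ζ := ⟨(ζ : ℂ) • 1, Unitary.smul_mem_of_mem
    (Unitary.mem_iff_star_mul_self.2 (by simp [← Circle.coe_inv_eq_conj])) (one_mem _)⟩
  map_one' := by ext1; simp
  map_mul' ζ η := Subtype.ext (by simp [smul_smul, mul_comm])

@[simp]
theorem coe_scalarUnitary (N : ℕ) (ζ : Circle) :
    (scalarUnitary N ζ : Matrix (Fin N) (Fin N) ℂ) = (ζ : ℂ) • 1 := rfl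

theorem commute_scalarUnitary {N : ℕ} (ζ : Circle) (V : Matrix.unitaryGroup (Fin N) ℂ) :
    Commute (scalarUnitary N ζ) V := by
  ext1; simp

theorem trace_scalarUnitary_zpow_mul {N : ℕ} (ζ : Circle) (k : ℤ)
    (V : Matrix.unitaryGroup (Fin N) ℂ) :
    Matrix.trace ((scalarUnitary N ζ ^ k * V : Matrix.unitaryGroup (Fin N) ℂ) :
      Matrix (Fin N) (Fin N) ℂ) = (ζ : ℂ) ^ k * Matrix.trace (V : Matrix (Fin N) (Fin N) ℂ) := by
  rw [← map_zpow, Submonoid.coe_mul, coe_scalarUnitary, smul_mul_assoc, one_mul,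
    Matrix.trace_smul, Circle.coe_zpow, smul_eq_mul]

section Charge

variable {N : ℕ} {Epos : Type*}

theorem loopVar_cons (U : Epos → Matrix.unitaryGroup (Fin N) ℂ) (eb : Epos × Bool)
    (ℓ : List (Epos × Bool)) :
    loopVar U (eb :: ℓ) = loopVar U [eb] * loopVar U ℓ := by
  simp [loopVar]

variable [DecidableEq Epos]

def netCount (ℓ : List (Epos × Bool)) (e : Epos) : ℤ :=
  ℓ.count (e, true) - ℓ.count (e, false)

theorem netCount_cons (eb : Epos × Bool) (ℓ : List (Epos × Bool)) (e : Epos) :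
    netCount (eb :: ℓ) e = netCount [eb] e + netCount ℓ e := by
  obtain ⟨e', b⟩ := eb
  cases b <;> by_cases h : e' = e <;> simp [netCount, h] <;> ring

theorem loopVar_mulSingle_mul {u : Matrix.unitaryGroup (Fin N) ℂ} (hu : ∀ v, Commute u v)
    (e₀ : Epos) (U : Epos → Matrix.unitaryGroup (Fin N) ℂ) (ℓ : List (Epos × Bool)) :
    loopVar (Pi.mulSingle e₀ u * U) ℓ = u ^ netCount ℓ e₀ * loopVar U ℓ := by
  induction ℓ with
  | nil => simp [loopVar, netCount]
  | cons eb ℓ ih =>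
    have hedge :
        loopVar (Pi.mulSingle e₀ u * U) [eb] = u ^ netCount [eb] e₀ * loopVar U [eb] := by
      obtain ⟨e, b⟩ := eb
      by_cases he : e = e₀
      · subst he
        cases b <;> simp [loopVar, netCount, ((hu _).inv_inv).eq]
      · simp [loopVar, netCount, he]
    rw [loopVar_cons _ eb ℓ, loopVar_cons U eb ℓ, hedge, ih, netCount_cons eb ℓ, zpow_add,
      mul_assoc, mul_assoc, ← ((hu _).zpow_left _).left_comm]

theorem sum_netCount_eq (s : List (List (Epos × Bool))) (e : Epos) :
    (s.map (netCount · e)).sum = (occCount s (e, true) : ℤ) - occCount s (e, false) := by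
  induction s with
  | nil => simp [occCount]
  | cons ℓ s ih =>
    simp only [occCount, List.map_cons, List.sum_cons, Nat.cast_add] at ih ⊢
    rw [ih, netCount]
    ring

theorem exists_charge_ne_zero_of_not_balancedPair {Pl : Type*} [Fintype Pl]
    {bd : Pl → List (Epos × Bool)} {s : List (List (Epos × Bool))} {J : Pl → ℕ}
    (h : ¬ BalancedPair bd s J) :
    ∃ e, (s.map (netCount · e)).sum + ∑ p, (J p : ℤ) * netCount (bd p) e ≠ 0 := by
  contrapose! h
  rintro ⟨e, b⟩
  have he := h e
  rw [sum_netCount_eq] at he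
  simp only [netCount, mul_sub, Finset.sum_sub_distrib] at he
  zify
  cases b <;> simp only [Bool.not_true, Bool.not_false] <;> linarith

variable (N) in
def HasCharge (e₀ : Epos) (k : ℤ) (F : (Epos → Matrix.unitaryGroup (Fin N) ℂ) → ℂ) : Prop :=
  ∀ (ζ : Circle) U, F (Pi.mulSingle e₀ (scalarUnitary N ζ) * U) = (ζ : ℂ) ^ k * F U

namespace HasCharge

variable {e₀ : Epos} {k m : ℤ} {F G : (Epos → Matrix.unitaryGroup (Fin N) ℂ) → ℂ}

theorem mul (hF : HasCharge N e₀ k F) (hG : HasCharge N e₀ m G) :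
    HasCharge N e₀ (k + m) (fun U => F U * G U) := by
  intro ζ U
  dsimp only
  rw [hF, hG, zpow_add₀ (Circle.coe_ne_zero ζ)]
  ring

theorem div_const (hF : HasCharge N e₀ k F) (c : ℂ) : HasCharge N e₀ k (fun U => F U / c) := by
  intro ζ U
  dsimp only
  rw [hF, mul_div_assoc]

theorem pow (hF : HasCharge N e₀ k F) (n : ℕ) : HasCharge N e₀ (n * k) (fun U => F U ^ n) := by
  intro ζ U
  dsimp only
  rw [hF, mul_pow, ← zpow_natCast, ← zpow_mul, mul_comm k]

theorem one : HasCharge N e₀ 0 (fun _ => 1) := by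
  intro ζ U
  simp

theorem list_prod {ι : Type*} (l : List ι)
    {F : ι → (Epos → Matrix.unitaryGroup (Fin N) ℂ) → ℂ} {k : ι → ℤ}
    (h : ∀ i ∈ l, HasCharge N e₀ (k i) (F i)) :
    HasCharge N e₀ (l.map k).sum (fun U => (l.map (F · U)).prod) := by
  induction l with
  | nil => simpa using one
  | cons i l ih =>
    simpa using (h i (by simp)).mul (ih fun j hj => h j (by simp [hj]))

theorem finset_prod {ι : Type*} (t : Finset ι)
    {F : ι → (Epos → Matrix.unitaryGroup (Fin N) ℂ) → ℂ} {k : ι → ℤ}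
    (h : ∀ i ∈ t, HasCharge N e₀ (k i) (F i)) :
    HasCharge N e₀ (∑ i ∈ t, k i) (fun U => ∏ i ∈ t, F i U) := by
  induction t using Finset.cons_induction with
  | empty => simpa using one
  | cons i t _ ih =>
    simpa [Finset.prod_cons, Finset.sum_cons] using
      (h i (by simp)).mul (ih fun j hj => h j (by simp [hj]))

end HasCharge

theorem hasCharge_trace_loopVar (e₀ : Epos) (ℓ : List (Epos × Bool)) :
    HasCharge N e₀ (netCount ℓ e₀)
      (fun U => Matrix.trace ((loopVar U ℓ : Matrix.unitaryGroup (Fin N) ℂ) :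
        Matrix (Fin N) (Fin N) ℂ)) := by
  intro ζ U
  dsimp only
  rw [loopVar_mulSingle_mul (commute_scalarUnitary ζ), trace_scalarUnitary_zpow_mul]

theorem hasCharge_Wstring (e₀ : Epos) (s : List (List (Epos × Bool))) :
    HasCharge N e₀ (s.map (netCount · e₀)).sum (fun U => Wstring U s) :=
  HasCharge.list_prod s fun ℓ _ => (hasCharge_trace_loopVar e₀ ℓ).div_const _

end Charge

theorem stmt_15_general {N : ℕ} {Epos Pl : Type*} [DecidableEq Epos] [Fintype Pl]
    (μ : Measure (Epos → Matrix.unitaryGroup (Fin N) ℂ))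
    [μ.IsHaarMeasure]
    (bd : Pl → List (Epos × Bool)) (s : List (List (Epos × Bool))) (J : Pl → ℕ)
    (hnb : ¬ BalancedPair bd s J) :
    ∫ U, Wstring U s *
        ∏ p, (Matrix.trace ((loopVar U (bd p) : Matrix.unitaryGroup (Fin N) ℂ) :
          Matrix (Fin N) (Fin N) ℂ)) ^ (J p) ∂μ = 0 := by
  obtain ⟨e₀, hk⟩ := exists_charge_ne_zero_of_not_balancedPair hnb
  obtain ⟨ζ, hζ⟩ := Circle.exists_coe_zpow_ne_one hk
  have hF := (hasCharge_Wstring (N := N) e₀ s).mul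
    (HasCharge.finset_prod univ fun p _ => (hasCharge_trace_loopVar e₀ (bd p)).pow (J p))
  exact integral_eq_zero_of_mul_left_eq_const_mul μ hζ (hF ζ)

/-- If (s, J) is not balanced, then the integral over independent Haar
unitaries of W_s(U) ∏_p Tr(U_p)^{J(p)} vanishes. -/
theorem stmt_15 {N : ℕ} {Epos Pl : Type*} [DecidableEq Epos] [Fintype Pl]
    (μ : Measure (Epos → Matrix.unitaryGroup (Fin N) ℂ))
    [μ.IsHaarMeasure] [IsProbabilityMeasure μ]
    (bd : Pl → List (Epos × Bool)) (s : List (List (Epos × Bool))) (J : Pl → ℕ)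
    (hnb : ¬ BalancedPair bd s J) :
    ∫ U, Wstring U s *
        ∏ p, (Matrix.trace ((loopVar U (bd p) : Matrix.unitaryGroup (Fin N) ℂ) :
          Matrix (Fin N) (Fin N) ℂ)) ^ (J p) ∂μ = 0 :=
  stmt_15_general μ bd s J hnb
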